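/- arXiv:2005.08540 — 2 statements merged into one kernel-verified Lean document; each statement's English description precedes it below -/
import Mathlib

section
/- For every nonempty finite database D, every set of predicates S, and every real ε ≥ 0: if 1 − f2(D,S) ≤ ε, then 1 − f1(D,S) ≤ 2ε. -/
/-! In fact `f2 ≤ f1`: each tuple `t` counted by `f2` yields `|D|` satisfying pairs `(t, t')`,
so the claim holds even with `ε` in place of `2ε`. -/

/-- A pair `(t, t')` of tuples *satisfies* the DC identified with the predicate set `S`
if some predicate `P ∈ S` fails on `(t, t')`. -/
def PairSat {α : Type*} (S : Set (α → α → Prop)) (t t' : α) : Prop :=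
  ∃ P ∈ S, ¬ P t t'

/-- `f1 D S` is the number of pairs `(t,t') ∈ D × D` satisfying `S`, divided by `|D|²`. -/
noncomputable def f1 {α : Type*} (D : Finset α) (S : Set (α → α → Prop)) : ℝ :=
  (Set.ncard {q : α × α | q.1 ∈ D ∧ q.2 ∈ D ∧ PairSat S q.1 q.2} : ℝ) / (D.card : ℝ) ^ 2

/-- `f2 D S` is the number of tuples `t ∈ D` such that for every `t' ∈ D` both `(t,t')`
and `(t',t)` satisfy `S`, divided by `|D|`. -/
noncomputable def f2 {α : Type*} (D : Finset α) (S : Set (α → α → Prop)) : ℝ :=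
  (Set.ncard {t : α | t ∈ D ∧ ∀ t' ∈ D, PairSat S t t' ∧ PairSat S t' t} : ℝ) / (D.card : ℝ)

/-- `f3 D S` is the maximum cardinality of a subset `D' ⊆ D` all of whose pairs satisfy `S`,
divided by `|D|`. -/
noncomputable def f3 {α : Type*} (D : Finset α) (S : Set (α → α → Prop)) : ℝ :=
  ((sSup {n : ℕ | ∃ D' : Finset α, D' ⊆ D ∧ (∀ t ∈ D', ∀ t' ∈ D', PairSat S t t') ∧
      D'.card = n} : ℕ) : ℝ) / (D.card : ℝ)

theorem ncard_clean_mul_card_le_ncard_pairSat {α : Type*} (D : Finset α)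
    (S : Set (α → α → Prop)) :
    Set.ncard {t : α | t ∈ D ∧ ∀ t' ∈ D, PairSat S t t' ∧ PairSat S t' t} * D.card ≤
      Set.ncard {q : α × α | q.1 ∈ D ∧ q.2 ∈ D ∧ PairSat S q.1 q.2} := by
  rw [← Set.ncard_coe_finset D, ← Set.ncard_prod]
  apply Set.ncard_le_ncard
  · rintro ⟨t, t'⟩ ⟨⟨htD, hclean⟩, ht'D⟩
    exact ⟨htD, ht'D, (hclean t' ht'D).1⟩
  · exact (D ×ˢ D).finite_toSet.subset fun q hq => Finset.mem_product.2 ⟨hq.1, hq.2.1⟩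

theorem f2_le_f1 {α : Type*} (D : Finset α) (S : Set (α → α → Prop)) : f2 D S ≤ f1 D S := by
  rcases Nat.eq_zero_or_pos D.card with hempty | hpos
  · simp [f1, f2, hempty]
  have hcard : (D.card : ℝ) ≠ 0 := by positivity
  unfold f1 f2
  calc _ = (Set.ncard {t : α | t ∈ D ∧ ∀ t' ∈ D, PairSat S t t' ∧ PairSat S t' t} * D.card : ℝ) /
          (D.card : ℝ) ^ 2 := by rw [sq, mul_div_mul_right _ _ hcard]
    _ ≤ _ := by gcongr; exact_mod_cast ncard_clean_mul_card_le_ncard_pairSat D S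

theorem f2_le_implies_f1_le_general {α : Type*} (D : Finset α)
    (S : Set (α → α → Prop)) (ε : ℝ) (hε : 0 ≤ ε)
    (h : 1 - f2 D S ≤ ε) :
    1 - f1 D S ≤ 2 * ε := by
  linarith [f2_le_f1 D S]

/-- if `1 - f2 D S ≤ ε` then `1 - f1 D S ≤ 2ε`. -/
theorem f2_le_implies_f1_le {α : Type*} (D : Finset α) (hD : D.Nonempty)
    (S : Set (α → α → Prop)) (ε : ℝ) (hε : 0 ≤ ε)
    (h : 1 - f2 D S ≤ ε) :
    1 - f1 D S ≤ 2 * ε :=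
  f2_le_implies_f1_le_general D S ε hε h
end

section
/- For every nonempty finite database D, every set of predicates S, and every real ε ≥ 0: if 1 − f3(D,S) ≤ ε, then 1 − f1(D,S) ≤ 2ε. -/
/-!
If `D' ⊆ D` is a largest set all of whose pairs satisfy `S`, then `D' × D'` consists of satisfying
pairs, so `f1 ≥ (|D'| / |D|)² = f3²`. Hence `1 - f1 ≤ 1 - f3² = 2 (1 - f3) - (1 - f3)² ≤ 2 (1 - f3)`.
-/

section

variable {α : Type*} (D : Finset α) (S : Set (α → α → Prop))

theorem card_sq_le_ncard_pairSat {D' : Finset α} (hsub : D' ⊆ D)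
    (hsat : ∀ t ∈ D', ∀ t' ∈ D', PairSat S t t') :
    D'.card ^ 2 ≤ {q : α × α | q.1 ∈ D ∧ q.2 ∈ D ∧ PairSat S q.1 q.2}.ncard := by
  have hfin : {q : α × α | q.1 ∈ D ∧ q.2 ∈ D ∧ PairSat S q.1 q.2}.Finite :=
    (D ×ˢ D).finite_toSet.subset fun q hq => Finset.mem_product.2 ⟨hq.1, hq.2.1⟩
  have hprod : (↑(D' ×ˢ D') : Set (α × α)) ⊆
      {q : α × α | q.1 ∈ D ∧ q.2 ∈ D ∧ PairSat S q.1 q.2} := fun q hq => by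
    rw [Finset.mem_coe, Finset.mem_product] at hq
    exact ⟨hsub hq.1, hsub hq.2, hsat _ hq.1 _ hq.2⟩
  simpa [sq, Set.ncard_coe_finset] using Set.ncard_le_ncard hprod hfin

theorem exists_subset_card_eq_sSup (P : Finset α → Prop) (hP : P ∅) :
    ∃ D' ⊆ D, P D' ∧ D'.card = sSup {n : ℕ | ∃ D' ⊆ D, P D' ∧ D'.card = n} := by
  refine Nat.sSup_mem (s := {n : ℕ | ∃ D' ⊆ D, P D' ∧ D'.card = n})
    ⟨0, ∅, by simpa⟩ ⟨D.card, ?_⟩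
  rintro n ⟨D', hsub, -, rfl⟩
  exact Finset.card_le_card hsub

theorem f3_sq_le_f1 : f3 D S ^ 2 ≤ f1 D S := by
  obtain ⟨D', hsub, hsat, hcard⟩ :=
    exists_subset_card_eq_sSup D (fun D' => ∀ t ∈ D', ∀ t' ∈ D', PairSat S t t') (by simp)
  rw [f3, f1, ← hcard, div_pow]
  gcongr
  exact_mod_cast card_sq_le_ncard_pairSat D S hsub hsat

end

theorem f3_le_implies_f1_le_general {α : Type*} (D : Finset α)
    (S : Set (α → α → Prop)) (ε : ℝ)
    (h : 1 - f3 D S ≤ ε) :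
    1 - f1 D S ≤ 2 * ε :=
  calc 1 - f1 D S ≤ 1 - f3 D S ^ 2 := by linarith [f3_sq_le_f1 D S]
    _ = 2 * (1 - f3 D S) - (1 - f3 D S) ^ 2 := by ring
    _ ≤ 2 * ε := by linarith [sq_nonneg (1 - f3 D S)]

/-- if `1 - f3 D S ≤ ε` then `1 - f1 D S ≤ 2ε`. -/
theorem f3_le_implies_f1_le {α : Type*} (D : Finset α) (hD : D.Nonempty)
    (S : Set (α → α → Prop)) (ε : ℝ) (hε : 0 ≤ ε)
    (h : 1 - f3 D S ≤ ε) :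
    1 - f1 D S ≤ 2 * ε :=
  f3_le_implies_f1_le_general D S ε h
end
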